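/- When r = 1, the set of Kleshchev 1-partitions of n with respect to (e; v) equals the set of e-restricted partitions of n, for any e = 0 or e ≥ 2 and any v ∈ ℤ/eℤ. -/

import Mathlib

open Finset

/-- An `r`-multipartition: a tuple of finitely supported weakly decreasing
sequences of naturals (rows are 0-based). -/
structure MultiPartition (r : ℕ) where
  part : Fin r → ℕ →₀ ℕ
  mono : ∀ s i, part s (i + 1) ≤ part s i

namespace MultiPartition

variable {r e : ℕ}

/-- total number of nodes -/
def size (l : MultiPartition r) : ℕ := ∑ s, (l.part s).sum fun _ v => v

/-- a position: (component, row), both 0-based -/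
abbrev Pos (r : ℕ) := Fin r × ℕ

/-- `Below p q` : the position `p` is strictly below `q`
(larger component index, or equal component and larger row). -/
def Below (p q : Pos r) : Prop := q.1 < p.1 ∨ (p.1 = q.1 ∧ q.2 < p.2)

/-- row `p.2` of component `p.1` carries a removable node -/
def Removable (l : MultiPartition r) (p : Pos r) : Prop :=
  l.part p.1 (p.2 + 1) < l.part p.1 p.2

/-- row `p.2` of component `p.1` carries an addable node -/
def Addable (l : MultiPartition r) (p : Pos r) : Prop :=
  p.2 = 0 ∨ l.part p.1 p.2 < l.part p.1 (p.2 - 1)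

/-- residue of the node in row `i`, column `j` (0-based) of component `s`:
`j - i + v s` in `ZMod e` (for `e = 0` this is `ℤ`). -/
def resNode (v : Fin r → ZMod e) (s : Fin r) (i j : ℕ) : ZMod e :=
  (j : ZMod e) - (i : ZMod e) + v s

/-- residue of the removable node in row `p` -/
def resRem (v : Fin r → ZMod e) (l : MultiPartition r) (p : Pos r) : ZMod e :=
  resNode v p.1 p.2 (l.part p.1 p.2 - 1)

/-- residue of the addable node in row `p` -/
def resAdd (v : Fin r → ZMod e) (l : MultiPartition r) (p : Pos r) : ZMod e :=
  resNode v p.1 p.2 (l.part p.1 p.2)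

/-- `p` is a normal `x`-node of `l`: it is a removable `x`-node, and for every
addable `x`-node `q` below it, there are strictly more removable `x`-nodes than
addable `x`-nodes strictly between `q` and `p`. -/
def Normal (v : Fin r → ZMod e) (l : MultiPartition r) (p : Pos r) (x : ZMod e) : Prop :=
  Removable l p ∧ resRem v l p = x ∧
  ∀ q : Pos r, Addable l q → resAdd v l q = x → Below q p →
    {q' : Pos r | Removable l q' ∧ resRem v l q' = x ∧ Below q' p ∧ Below q q'}.ncard >
    {q' : Pos r | Addable l q' ∧ resAdd v l q' = x ∧ Below q' p ∧ Below q q'}.ncard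

/-- the good `x`-node: the highest normal `x`-node -/
def Good (v : Fin r → ZMod e) (l : MultiPartition r) (p : Pos r) (x : ZMod e) : Prop :=
  Normal v l p x ∧ ∀ q, Normal v l q x → ¬ Below p q

/-- `m` is obtained from `l` by adding one node at the end of row `p.2` of
component `p.1`. -/
def AddNode (l m : MultiPartition r) (p : Pos r) : Prop :=
  (∀ s, s ≠ p.1 → m.part s = l.part s) ∧
  (∀ i, i ≠ p.2 → m.part p.1 i = l.part p.1 i) ∧
  m.part p.1 p.2 = l.part p.1 p.2 + 1

/-- the empty multipartition -/
def IsEmptyMP (l : MultiPartition r) : Prop := ∀ s, l.part s = 0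

/-- Kleshchev multipartitions with respect to `(e; v)`: defined recursively by
adding good nodes. -/
inductive Kleshchev (v : Fin r → ZMod e) : MultiPartition r → Prop
  | empty (l : MultiPartition r) : IsEmptyMP l → Kleshchev v l
  | step (l m : MultiPartition r) (p : Pos r) (x : ZMod e) :
      Kleshchev v l → AddNode l m p → Good v m p x → Kleshchev v m

/-- a semi-ladder node: a removable node with no lower addable node of the
same residue -/
def SemiLadder (v : Fin r → ZMod e) (l : MultiPartition r) (p : Pos r) : Prop :=
  Removable l p ∧ ∀ q, Addable l q → resAdd v l q = resRem v l p → ¬ Below q p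

/-- a ladder node: a semi-ladder node with no higher semi-ladder node of the
same residue -/
def LadderNode (v : Fin r → ZMod e) (l : MultiPartition r) (p : Pos r) : Prop :=
  SemiLadder v l p ∧
  ∀ q, SemiLadder v l q → resRem v l q = resRem v l p → ¬ Below p q

/-- `m` is obtained from `l` by removing all the nodes of the ladder
`x`-sequence of `l` (i.e. all semi-ladder `x`-nodes of `l`, which is required
to be nonempty). -/
def RemoveLadderSeq (v : Fin r → ZMod e) (l m : MultiPartition r) (x : ZMod e) : Prop :=
  (∃ p, SemiLadder v l p ∧ resRem v l p = x) ∧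
  ∀ s i, (SemiLadder v l (s, i) ∧ resRem v l (s, i) = x →
            m.part s i = l.part s i - 1) ∧
         (¬ (SemiLadder v l (s, i) ∧ resRem v l (s, i) = x) →
            m.part s i = l.part s i)

/-- strong ladder multipartitions: obtained from the empty multipartition by
successively adding whole ladder sequences -/
inductive StrongLadder (v : Fin r → ZMod e) : MultiPartition r → Prop
  | empty (l : MultiPartition r) : IsEmptyMP l → StrongLadder v l
  | step (l m : MultiPartition r) (x : ZMod e) :
      StrongLadder v l → RemoveLadderSeq v m l x → StrongLadder v m

/-- ladder multipartitions: obtained from the empty multipartition by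
successively adding single ladder nodes -/
inductive Ladder (v : Fin r → ZMod e) : MultiPartition r → Prop
  | empty (l : MultiPartition r) : IsEmptyMP l → Ladder v l
  | step (l m : MultiPartition r) (p : Pos r) :
      Ladder v l → AddNode l m p → LadderNode v m p → Ladder v m

/-- the dominance order on multipartitions -/
def Dominates (l m : MultiPartition r) : Prop :=
  ∀ s : Fin r, ∀ i : ℕ,
    ((∑ a ∈ Finset.univ.filter (fun a => a < s), (l.part a).sum fun _ v => v) +
      ∑ j ∈ Finset.range i, l.part s j) ≥
    ((∑ a ∈ Finset.univ.filter (fun a => a < s), (m.part a).sum fun _ v => v) +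
      ∑ j ∈ Finset.range i, m.part s j)

/-- the order `≺` of Definition 3.6 -/
def Prec (l m : MultiPartition r) : Prop :=
  ∃ s : Fin r, ∃ t : ℕ,
    (∀ j, s < j → l.part j = m.part j) ∧
    (∀ j, t < j → l.part s j = m.part s j) ∧
    l.part s t < m.part s t

/-- hook length at the node in row `i`, column `j` (0-based) of a partition `f` -/
noncomputable def hookLen (f : ℕ →₀ ℕ) (i j : ℕ) : ℕ :=
  (f i - j) + {k : ℕ | i < k ∧ j < f k}.ncard

/-- an `e`-core: a partition having no hook of length `e`
(for `e = 0` every partition is a `0`-core) -/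
def ECore (e : ℕ) (f : ℕ →₀ ℕ) : Prop :=
  ∀ i j, j < f i → hookLen f i j ≠ e

/-- `e`-restricted partitions (every partition is `0`-restricted) -/
def ERestricted (e : ℕ) (f : ℕ →₀ ℕ) : Prop :=
  ∀ i, e ≠ 0 → f i - f (i + 1) < e

end MultiPartition

open MultiPartition

/-!
In a single partition, the removable node of row `t` and the addable node of row `t + 1` have
residues differing by `λ_t - λ_{t+1}`, so they agree exactly when `e` divides that difference;
since nothing lies between such an adjacent pair, it destroys normality. Hence adding a normal
node never creates a difference `e`. Conversely, in a nonempty `e`-restricted partition the lowest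
removable node is normal. Let `t` be the highest normal node of its residue, which is good. Removing
it keeps the partition `e`-restricted: otherwise `λ_{t-1} - λ_t = e - 1`, so the removable node of
row `t - 1` has the same residue and inherits normality from row `t`, contradicting maximality.
-/

theorem Finsupp.exists_ne_zero_and_succ_eq_zero {M : Type*} [Zero M] {f : ℕ →₀ M}
    (hf : f ≠ 0) : ∃ b, f b ≠ 0 ∧ f (b + 1) = 0 := by
  have hne : f.support.Nonempty := Finsupp.support_nonempty_iff.2 hf
  refine ⟨f.support.max' hne, Finsupp.mem_support_iff.1 (f.support.max'_mem hne), ?_⟩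
  by_contra h
  have := f.support.le_max' _ (Finsupp.mem_support_iff.2 h)
  omega

theorem ZMod.natCast_eq_natCast_add_iff {n a d : ℕ} :
    (a : ZMod n) = ((a + d : ℕ) : ZMod n) ↔ n ∣ d := by
  rw [Nat.cast_add, left_eq_add, ZMod.natCast_eq_zero_iff]

namespace MultiPartition

variable {r e : ℕ}

theorem antitone_part (l : MultiPartition r) (s : Fin r) : Antitone (l.part s) :=
  antitone_nat_of_succ_le (l.mono s)

theorem finite_setOf_removable (l : MultiPartition r) : {p : Pos r | Removable l p}.Finite := by
  refine (Set.finite_iUnion fun s => (l.part s).support.finite_toSet.image (Prod.mk s)).subset ?_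
  rintro ⟨s, i⟩ (h : l.part s (i + 1) < l.part s i)
  exact Set.mem_iUnion.2 ⟨s, i, Finsupp.mem_support_iff.2 (by omega), rfl⟩

section Below

variable {p q w : Pos r} {s : Fin r} {i j t : ℕ}

theorem below_irrefl (p : Pos r) : ¬ Below p p := by
  rintro (h | ⟨-, h⟩) <;> exact lt_irrefl _ h

theorem Below.trans (h₁ : Below p q) (h₂ : Below q w) : Below p w := by
  rcases h₁ with h₁ | ⟨e₁, h₁⟩ <;> rcases h₂ with h₂ | ⟨e₂, h₂⟩
  · exact .inl (h₂.trans h₁)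
  · exact .inl (e₂ ▸ h₁)
  · exact .inl (e₁ ▸ h₂)
  · exact .inr ⟨e₁.trans e₂, h₂.trans h₁⟩

theorem below_mk_iff : Below (s, i) (s, j) ↔ j < i := by
  simp [Below]

theorem Below.eq_or_below_succ (h : Below q (s, t)) :
    q = (s, t + 1) ∨ Below q (s, t + 1) := by
  obtain ⟨s', i⟩ := q
  rcases h with h | ⟨hs, h⟩
  · exact .inr (.inl h)
  · dsimp only at hs h
    subst hs
    rcases (Nat.succ_le_of_lt h).eq_or_lt with rfl | h
    · exact .inl rfl
    · exact .inr (below_mk_iff.2 h)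

theorem Below.not_below_succ (h : Below q (s, t)) : ¬ Below (s, t + 1) q := by
  rcases h.eq_or_below_succ with rfl | h
  · exact below_irrefl _
  · exact fun h' => below_irrefl _ (h.trans h')

end Below

section Residue

variable {v : Fin r → ZMod e} {l : MultiPartition r} {s : Fin r} {t : ℕ}

theorem resNode_eq_resNode_iff {i j i' j' : ℕ} :
    resNode v s i j = resNode v s i' j' ↔
      ((j + i' : ℕ) : ZMod e) = ((j' + i : ℕ) : ZMod e) := by
  unfold resNode
  push_cast
  constructor <;> intro h <;> linear_combination h

theorem resAdd_succ_eq_resRem_iff (h : Removable l (s, t)) :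
    resAdd v l (s, t + 1) = resRem v l (s, t) ↔ e ∣ l.part s t - l.part s (t + 1) := by
  have h' : l.part s (t + 1) < l.part s t := h
  rw [resAdd, resRem, resNode_eq_resNode_iff,
    show l.part s t - 1 + (t + 1) = l.part s (t + 1) + t + (l.part s t - l.part s (t + 1)) by
      omega,
    ZMod.natCast_eq_natCast_add_iff]

theorem resRem_eq_resRem_succ_iff (h : Removable l (s, t + 1)) :
    resRem v l (s, t) = resRem v l (s, t + 1) ↔ e ∣ l.part s t - l.part s (t + 1) + 1 := by
  have h' : l.part s (t + 1 + 1) < l.part s (t + 1) := h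
  have hmono := l.mono s t
  rw [resRem, resRem, resNode_eq_resNode_iff, eq_comm,
    show l.part s t - 1 + (t + 1) =
      l.part s (t + 1) - 1 + t + (l.part s t - l.part s (t + 1) + 1) by omega,
    ZMod.natCast_eq_natCast_add_iff]

theorem resAdd_eq_resRem_iff (h : 0 < l.part s t) :
    resAdd v l (s, t) = resRem v l (s, t) ↔ e = 1 := by
  rw [resAdd, resRem, resNode_eq_resNode_iff, eq_comm,
    show l.part s t + t = l.part s t - 1 + t + 1 by omega, ZMod.natCast_eq_natCast_add_iff,
    Nat.dvd_one]

theorem ERestricted.resAdd_succ_ne_resRem (hl : ERestricted e (l.part s))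
    (h : Removable l (s, t)) : resAdd v l (s, t + 1) ≠ resRem v l (s, t) := by
  have h' : l.part s (t + 1) < l.part s t := h
  rw [Ne, resAdd_succ_eq_resRem_iff h]
  intro hd
  rcases eq_or_ne e 0 with rfl | he
  · rw [zero_dvd_iff] at hd
    omega
  · have := Nat.le_of_dvd (by omega) hd
    have := hl t he
    omega

end Residue

section Normal

variable {v : Fin r → ZMod e} {l : MultiPartition r} {s : Fin r} {t : ℕ} {x : ZMod e}

theorem Normal.resAdd_succ_ne (hn : Normal v l (s, t) x) :
    resAdd v l (s, t + 1) ≠ resRem v l (s, t) := by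
  obtain ⟨hrem, hx, hcount⟩ := hn
  intro h
  have hlt := hcount (s, t + 1) (.inr hrem) (h.trans hx) (below_mk_iff.2 t.lt_succ_self)
  have hempty : {q' : Pos r | Removable l q' ∧ resRem v l q' = x ∧ Below q' (s, t) ∧
      Below (s, t + 1) q'} = ∅ :=
    Set.eq_empty_of_forall_notMem fun q' hq' => hq'.2.2.1.not_below_succ hq'.2.2.2
  rw [hempty, Set.ncard_empty] at hlt
  exact Nat.not_lt_zero _ hlt

theorem Normal.of_succ (hn : Normal v l (s, t + 1) x) (hrem : Removable l (s, t))
    (hx : resRem v l (s, t) = x) (hadd : resAdd v l (s, t + 1) ≠ x) : Normal v l (s, t) x := by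
  refine ⟨hrem, hx, fun q hqa hqx hq => ?_⟩
  have hq' : Below q (s, t + 1) :=
    hq.eq_or_below_succ.resolve_left (by rintro rfl; exact hadd hqx)
  have hstep : Below (s, t + 1) (s, t) := below_mk_iff.2 t.lt_succ_self
  calc {q' : Pos r | Addable l q' ∧ resAdd v l q' = x ∧ Below q' (s, t) ∧ Below q q'}.ncard
      = {q' : Pos r | Addable l q' ∧ resAdd v l q' = x ∧ Below q' (s, t + 1) ∧
          Below q q'}.ncard := by
        congr 1
        ext q'
        refine and_congr_right fun _ => and_congr_right fun hq'x => and_congr_left fun _ =>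
          ⟨fun h => h.eq_or_below_succ.resolve_left ?_, fun h => h.trans hstep⟩
        rintro rfl
        exact hadd hq'x
    _ < {q' : Pos r | Removable l q' ∧ resRem v l q' = x ∧ Below q' (s, t + 1) ∧
          Below q q'}.ncard :=
        hn.2.2 q hqa hqx hq'
    _ < {q' : Pos r | Removable l q' ∧ resRem v l q' = x ∧ Below q' (s, t) ∧
          Below q q'}.ncard := by
        refine Set.ncard_lt_ncard ?_ ((finite_setOf_removable l).subset fun _ h => h.1)
        refine (Set.ssubset_iff_of_subset ?_).2
          ⟨(s, t + 1), ?_, fun h => below_irrefl _ h.2.2.1⟩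
        · exact fun q' h => ⟨h.1, h.2.1, h.2.2.1.trans hstep, h.2.2.2⟩
        · exact ⟨hn.1, hn.2.1, hstep, hq'⟩

end Normal

section AddNode

variable {l m : MultiPartition r} {p : Pos r}

theorem AddNode.size_eq (h : AddNode l m p) : size m = size l + 1 := by
  classical
  obtain ⟨hs, hi, hp⟩ := h
  have hrow : m.part p.1 = l.part p.1 + Finsupp.single p.2 1 := by
    ext i
    rcases eq_or_ne i p.2 with rfl | hne
    · simp [hp]
    · simp [hi i hne, Ne.symm hne]
  have hcomp : ∀ s, ((m.part s).sum fun _ v => v) =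
      ((l.part s).sum fun _ v => v) + if s = p.1 then 1 else 0 := by
    intro s
    split_ifs with h
    · subst h
      rw [hrow, Finsupp.sum_add_index' (fun _ => rfl) (fun _ _ _ => rfl),
        Finsupp.sum_single_index rfl]
    · rw [hs s h, add_zero]
  simp only [size, hcomp, Finset.sum_add_distrib, Finset.sum_ite_eq', Finset.mem_univ, if_true]

noncomputable def eraseNode (l : MultiPartition r) (p : Pos r) (h : Removable l p) :
    MultiPartition r where
  part := Function.update l.part p.1 (l.part p.1 - Finsupp.single p.2 1)
  mono s i := by
    obtain ⟨s₀, t⟩ := p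
    have h' : l.part s₀ (t + 1) < l.part s₀ t := h
    rcases eq_or_ne s s₀ with rfl | hs
    · have := l.mono s i
      simp only [Function.update_self, Finsupp.coe_tsub, Pi.sub_apply, Finsupp.single_apply]
      split_ifs <;> subst_vars <;> omega
    · simpa only [Function.update_of_ne hs] using l.mono s i

theorem eraseNode_part_self (h : Removable l p) :
    (l.eraseNode p h).part p.1 = l.part p.1 - Finsupp.single p.2 1 :=
  Function.update_self ..

theorem addNode_eraseNode (h : Removable l p) : AddNode (l.eraseNode p h) l p := by
  have h' : l.part p.1 (p.2 + 1) < l.part p.1 p.2 := h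
  refine ⟨fun s hs => (Function.update_of_ne hs ..).symm, fun i hi => ?_, ?_⟩ <;>
    simp only [eraseNode_part_self, Finsupp.coe_tsub, Pi.sub_apply, Finsupp.single_apply]
  · rw [if_neg (Ne.symm hi), Nat.sub_zero]
  · rw [if_pos trivial]
    omega

end AddNode

section ERestricted

variable {v : Fin r → ZMod e} {x : ZMod e}

theorem ERestricted.tsub_single {f : ℕ →₀ ℕ} {t : ℕ} (hf : ERestricted e f)
    (hprev : ∀ i, i + 1 = t → e ≠ 0 → f i - f t + 1 < e) :
    ERestricted e (f - Finsupp.single t 1) := by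
  intro i he
  have := hf i he
  simp only [Finsupp.coe_tsub, Pi.sub_apply, Finsupp.single_apply]
  split_ifs with h₁ h₂ h₂
  · omega
  · omega
  · subst h₂
    have := hprev i rfl he
    omega
  · omega

theorem ERestricted.of_addNode_of_normal {l m : MultiPartition r} {s : Fin r} {t : ℕ}
    (hl : ERestricted e (l.part s)) (hadd : AddNode l m (s, t)) (hn : Normal v m (s, t) x) :
    ERestricted e (m.part s) := by
  obtain ⟨-, hrow, ht⟩ := hadd
  have hrow : ∀ i, i ≠ t → m.part s i = l.part s i := hrow
  have ht : m.part s t = l.part s t + 1 := ht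
  intro i he
  have hli := hl i he
  rcases eq_or_ne i t with rfl | hi
  · rw [ht, hrow (i + 1) (by omega)]
    have := l.mono s i
    refine lt_of_le_of_ne (by omega) fun heq => hn.resAdd_succ_ne ?_
    rw [resAdd_succ_eq_resRem_iff hn.1, ht, hrow (i + 1) (by omega), heq]
  · have : l.part s (i + 1) ≤ m.part s (i + 1) := by
      rcases eq_or_ne (i + 1) t with rfl | hi'
      · omega
      · rw [hrow _ hi']
    rw [hrow i hi]
    omega

end ERestricted

section OneComponent

variable {v : Fin 1 → ZMod e} {l : MultiPartition 1} {t : ℕ} {x : ZMod e}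

theorem Kleshchev.eRestricted (h : Kleshchev v l) : ERestricted e (l.part 0) := by
  induction h with
  | empty l hl =>
    intro i he
    simp only [hl 0, Finsupp.coe_zero, Pi.zero_apply, Nat.sub_zero]
    exact Nat.pos_of_ne_zero he
  | step l m p x _ hadd hgood ih =>
    obtain ⟨s, t⟩ := p
    obtain rfl := Subsingleton.elim s 0
    exact ih.of_addNode_of_normal hadd hgood.1

theorem normal_of_part_succ_eq_zero (hrem : Removable l (0, t)) (hzero : l.part 0 (t + 1) = 0)
    (hne : resAdd v l (0, t + 1) ≠ resRem v l (0, t)) :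
    Normal v l (0, t) (resRem v l (0, t)) := by
  refine ⟨hrem, rfl, fun ⟨s, g⟩ hqa hqx hq => absurd ?_ hne⟩
  obtain rfl := Subsingleton.elim s 0
  rw [below_mk_iff] at hq
  obtain rfl : g = t + 1 := by
    rcases hqa with hg | hg
    · dsimp only at hg
      omega
    · dsimp only at hg
      by_contra hne
      have := l.antitone_part 0 (show t + 1 ≤ g - 1 by omega)
      omega
  exact hqx

theorem good_of_forall_lt_not_normal (hn : Normal v l (0, t) x)
    (hmin : ∀ i < t, ¬ Normal v l (0, i) x) : Good v l (0, t) x :=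
  ⟨hn, fun ⟨s, i⟩ hq hb => by
    obtain rfl := Subsingleton.elim s 0
    exact hmin i (below_mk_iff.1 hb) hq⟩

theorem ERestricted.exists_good_eraseNode (hl : ERestricted e (l.part 0)) (h0 : l.part 0 ≠ 0) :
    ∃ t x, ∃ h : Removable l (0, t), Good v l (0, t) x ∧
      ERestricted e ((l.eraseNode (0, t) h).part 0) := by
  classical
  obtain ⟨b, hb, hb1⟩ := Finsupp.exists_ne_zero_and_succ_eq_zero h0
  have hremb : Removable l (0, b) := show l.part 0 (b + 1) < l.part 0 b by omega
  have he1 : e ≠ 1 := by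
    rintro rfl
    have := hl b one_ne_zero
    omega
  set x := resRem v l (0, b)
  have hex : ∃ t, Normal v l (0, t) x :=
    ⟨b, normal_of_part_succ_eq_zero hremb hb1 (hl.resAdd_succ_ne_resRem hremb)⟩
  obtain ⟨t, hn, hmin⟩ : ∃ t, Normal v l (0, t) x ∧ ∀ i < t, ¬ Normal v l (0, i) x :=
    ⟨Nat.find hex, Nat.find_spec hex, fun i => Nat.find_min hex⟩
  refine ⟨t, x, hn.1, good_of_forall_lt_not_normal hn hmin, ?_⟩
  rw [eraseNode_part_self]
  dsimp only
  refine hl.tsub_single fun i hi he => ?_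
  subst hi
  by_contra hge
  have hlt := hl i he
  have hdvd : e ∣ l.part 0 i - l.part 0 (i + 1) + 1 := by
    rw [show l.part 0 i - l.part 0 (i + 1) + 1 = e by omega]
  have hremi : Removable l (0, i) := show l.part 0 (i + 1) < l.part 0 i by omega
  have hpos : 0 < l.part 0 (i + 1) := Nat.zero_lt_of_lt hn.1
  refine hmin i i.lt_succ_self (hn.of_succ hremi ?_ ?_)
  · rw [(resRem_eq_resRem_succ_iff hn.1).2 hdvd, hn.2.1]
  · rw [← hn.2.1, Ne, resAdd_eq_resRem_iff hpos]
    exact he1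

theorem ERestricted.kleshchev (hl : ERestricted e (l.part 0)) : Kleshchev v l := by
  induction hn : size l using Nat.strong_induction_on generalizing l with
  | _ n ih =>
    by_cases h0 : l.part 0 = 0
    · exact .empty l fun s => Subsingleton.elim s 0 ▸ h0
    obtain ⟨t, x, hrem, hgood, hl'⟩ := hl.exists_good_eraseNode (v := v) h0
    have hadd := addNode_eraseNode hrem
    exact .step _ l _ x (ih _ (by rw [← hn, hadd.size_eq]; exact Nat.lt_succ_self _) hl' rfl)
      hadd hgood

end OneComponent

end MultiPartition

theorem kleshchev_r_one_iff_erestricted_general {e : ℕ}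
    (v : Fin 1 → ZMod e) (l : MultiPartition 1) :
    Kleshchev v l ↔ ERestricted e (l.part 0) :=
  ⟨Kleshchev.eRestricted, ERestricted.kleshchev⟩

/-- for `r = 1`, the Kleshchev partitions of `n` are exactly the
`e`-restricted partitions of `n`. -/
theorem kleshchev_r_one_iff_erestricted {e n : ℕ} (he : e = 0 ∨ 2 ≤ e)
    (v : Fin 1 → ZMod e) (l : MultiPartition 1) (hn : size l = n) :
    Kleshchev v l ↔ ERestricted e (l.part 0) :=
  kleshchev_r_one_iff_erestricted_general v l
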